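/- For fixed k, define b^{(k)} by b_n^{(k)} = 0 for n < k, b_k^{(k)} = (λ_k/(λ_k − λ_{k-1})) · f_{k+1}²/(f_k f_{k+1}), and b_n^{(k)} = (λ_k/(λ_k − λ_{k-1})) · f_{n+1}²/(f_k f_{k+1}) − (λ_k/(λ_{k+1} − λ_k)) · f_{n+1}²/(f_{k+1} f_{k+2}) for n > k. Then F̄(b^{(k)}) = e^{(k)}, the sequence with 1 in position k and 0 elsewhere. -/

import Mathlib

open Filter Finset

noncomputable def fibR : ℕ → ℝ
  | 0 => 1
  | 1 => 1
  | (n + 2) => fibR (n + 1) + fibR n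

noncomputable def Fhat (x : ℕ → ℝ) (n : ℕ) : ℝ :=
  fibR n / fibR (n + 1) * x n - fibR (n + 1) / fibR n * (if n = 0 then 0 else x (n - 1))

noncomputable def Fbar (Λ : ℕ → ℝ) (x : ℕ → ℝ) (n : ℕ) : ℝ :=
  (1 / Λ n) * ∑ k ∈ Finset.range (n + 1),
    (Λ k - if k = 0 then 0 else Λ (k - 1)) *
      (fibR k / fibR (k + 1) * x k -
        fibR (k + 1) / fibR k * (if k = 0 then 0 else x (k - 1)))

noncomputable def bseq (Λ : ℕ → ℝ) (k n : ℕ) : ℝ :=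
  if n < k then 0
  else if n = k then
    (Λ k / (Λ k - if k = 0 then 0 else Λ (k - 1))) * (fibR (k + 1) ^ 2 / (fibR k * fibR (k + 1)))
  else
    (Λ k / (Λ k - if k = 0 then 0 else Λ (k - 1))) * (fibR (n + 1) ^ 2 / (fibR k * fibR (k + 1)))
      - (Λ k / (Λ (k + 1) - Λ k)) * (fibR (n + 1) ^ 2 / (fibR (k + 1) * fibR (k + 2)))

/-!
`Fhat` annihilates `n ↦ f_{n+1}²` because `(f_n/f_{n+1}) f_{n+1}² = f_n f_{n+1} = (f_{n+1}/f_n) f_n²`.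
Hence `Fhat` maps the truncation of this sequence to `n ≥ m`, normalised by `f_m f_{m+1}`, to the
unit vector `e^{(m)}`. Now `b^{(k)}` is a combination of the truncations at `k` and `k + 1`, so
the summands `(λ_j − λ_{j−1}) Fhat(b^{(k)})_j` of `F̄_n` are `λ_k` at `j = k`, `−λ_k` at `j = k + 1`
and zero otherwise; the sum telescopes to `λ_k [n = k]`.
-/

lemma fibR_pos : ∀ n, 0 < fibR n
  | 0 => by rw [fibR]; norm_num
  | 1 => by rw [fibR]; norm_num
  | (n + 2) => by rw [fibR]; exact add_pos (fibR_pos (n + 1)) (fibR_pos n)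

def jump (Λ : ℕ → ℝ) (j : ℕ) : ℝ := Λ j - if j = 0 then 0 else Λ (j - 1)

lemma jump_succ (Λ : ℕ → ℝ) (j : ℕ) : jump Λ (j + 1) = Λ (j + 1) - Λ j := by
  simp [jump]

lemma jump_pos {Λ : ℕ → ℝ} (hmono : StrictMono Λ) (hpos : ∀ k, 0 < Λ k) (j : ℕ) :
    0 < jump Λ j := by
  cases j with
  | zero => simpa [jump] using hpos 0
  | succ j => rw [jump_succ]; exact sub_pos.2 (hmono j.lt_succ_self)

lemma Fbar_eq_sum_jump_mul_Fhat (Λ x : ℕ → ℝ) (n : ℕ) :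
    Fbar Λ x n = 1 / Λ n * ∑ j ∈ range (n + 1), jump Λ j * Fhat x j :=
  rfl

lemma Fhat_sub (a b : ℝ) (x y : ℕ → ℝ) (n : ℕ) :
    Fhat (fun i => a * x i - b * y i) n = a * Fhat x n - b * Fhat y n := by
  unfold Fhat
  split_ifs <;> ring

noncomputable def fibSqFrom (m n : ℕ) : ℝ :=
  if m ≤ n then fibR (n + 1) ^ 2 / (fibR m * fibR (m + 1)) else 0

lemma Fhat_fibSqFrom (m n : ℕ) : Fhat (fibSqFrom m) n = if n = m then 1 else 0 := by
  have hf := fibR_pos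
  unfold Fhat fibSqFrom
  rcases lt_trichotomy n m with hlt | rfl | hgt
  · simp [hlt.ne, hlt.not_ge, (n.sub_le 1).trans_lt hlt |>.not_ge]
  · have hprev : ¬ n ≤ n - 1 ∨ n = 0 := by omega
    rcases hprev with hprev | rfl
    · simp only [le_refl, if_true, hprev, if_false, ite_self, mul_zero, sub_zero]
      field_simp [(hf n).ne', (hf (n + 1)).ne']
    · simp only [le_refl, if_true, mul_zero, sub_zero]
      field_simp [(hf 0).ne', (hf 1).ne']
  · obtain ⟨p, rfl⟩ : ∃ p, n = p + 1 := ⟨n - 1, by omega⟩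
    simp only [hgt.le, (Nat.lt_succ_iff.1 hgt), if_true, p.succ_ne_zero, if_false,
      Nat.add_sub_cancel, hgt.ne']
    field_simp [(hf p).ne', (hf (p + 1)).ne', (hf (p + 2)).ne', (hf m).ne', (hf (m + 1)).ne']
    ring

lemma bseq_eq_sub_fibSqFrom (Λ : ℕ → ℝ) (k : ℕ) :
    bseq Λ k = fun n =>
      Λ k / jump Λ k * fibSqFrom k n - Λ k / jump Λ (k + 1) * fibSqFrom (k + 1) n := by
  funext n
  rw [jump_succ]
  unfold bseq fibSqFrom jump
  rcases lt_trichotomy n k with hlt | rfl | hgt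
  · simp [hlt, hlt.not_ge, (hlt.trans k.lt_succ_self).not_ge]
  · simp
  · simp [hgt.not_gt, hgt.ne', hgt.le, Nat.succ_le_of_lt hgt]

lemma jump_mul_Fhat_bseq {Λ : ℕ → ℝ} (hmono : StrictMono Λ) (hpos : ∀ k, 0 < Λ k) (k j : ℕ) :
    jump Λ j * Fhat (bseq Λ k) j = (if j = k then Λ k else 0) - if j = k + 1 then Λ k else 0 := by
  rw [bseq_eq_sub_fibSqFrom, Fhat_sub, Fhat_fibSqFrom, Fhat_fibSqFrom]
  have hjump := jump_pos hmono hpos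
  split_ifs with hk hk1 hk1
  · omega
  · subst hk; field_simp [(hjump j).ne']; ring
  · subst hk1; field_simp [(hjump (k + 1)).ne']; ring
  · ring

theorem fbar_bseq_general (Λ : ℕ → ℝ) (hmono : StrictMono Λ) (hpos : ∀ k, 0 < Λ k)
    (k n : ℕ) :
    Fbar Λ (bseq Λ k) n = if n = k then 1 else 0 := by
  rw [Fbar_eq_sum_jump_mul_Fhat]
  simp only [jump_mul_Fhat_bseq hmono hpos, sum_sub_distrib, sum_ite_eq', mem_range]
  rcases lt_trichotomy n k with h | rfl | h
  · rw [if_neg (by omega), if_neg (by omega), if_neg (by omega)]; ring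
  · rw [if_pos (by omega), if_neg (by omega), if_pos rfl, sub_zero, one_div,
      inv_mul_cancel₀ (hpos n).ne']
  · rw [if_pos (by omega), if_pos (by omega), if_neg (by omega)]; ring

theorem fbar_bseq (Λ : ℕ → ℝ) (hmono : StrictMono Λ) (hpos : ∀ k, 0 < Λ k)
    (hlim : Tendsto Λ atTop atTop) (k n : ℕ) :
    Fbar Λ (bseq Λ k) n = if n = k then 1 else 0 :=
  fbar_bseq_general Λ hmono hpos k n
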